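/- arXiv:2506.20904 — 8 statements merged into one kernel-verified Lean document; each statement's English description precedes it below -/
import Mathlib

section
/- For any random variable X with finite variance and any real number a, the variance of min(X, a) is at most the variance of X. -/
open MeasureTheory ProbabilityTheory
open scoped NNReal

namespace ProbabilityTheory

variable {Ω : Type*} [MeasurableSpace Ω] {μ : Measure Ω} [IsProbabilityMeasure μ]

lemma variance_le_integral_sub_sq {Y : Ω → ℝ} (hY : AEStronglyMeasurable Y μ) (c : ℝ) :
    Var[Y; μ] ≤ ∫ ω, (Y ω - c) ^ 2 ∂μ := by
  rw [← variance_sub_const hY c]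
  exact variance_le_expectation_sq (hY.sub aestronglyMeasurable_const)

/-- Compare `f ∘ X` with the constant `f 𝔼[X]` rather than with its own mean. -/
lemma _root_.LipschitzWith.variance_comp_le {K : ℝ≥0} {f : ℝ → ℝ} (hf : LipschitzWith K f)
    {X : Ω → ℝ} (hX : MemLp X 2 μ) :
    Var[fun ω ↦ f (X ω); μ] ≤ K ^ 2 * Var[X; μ] := by
  have hpoint (x : ℝ) : (f x - f μ[X]) ^ 2 ≤ K ^ 2 * (x - μ[X]) ^ 2 := by
    have h := hf.dist_le_mul x μ[X]
    rw [Real.dist_eq, Real.dist_eq] at h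
    rw [← sq_abs, ← sq_abs (x - μ[X]), ← mul_pow]
    exact pow_le_pow_left₀ (abs_nonneg _) h 2
  calc Var[fun ω ↦ f (X ω); μ]
      ≤ ∫ ω, (f (X ω) - f μ[X]) ^ 2 ∂μ :=
        variance_le_integral_sub_sq (hf.continuous.comp_aestronglyMeasurable hX.1) _
    _ ≤ ∫ ω, K ^ 2 * (X ω - μ[X]) ^ 2 ∂μ :=
        integral_mono_of_nonneg (ae_of_all _ fun _ ↦ sq_nonneg _)
          ((hX.sub (memLp_const _)).integrable_sq.const_mul _) (ae_of_all _ fun ω ↦ hpoint (X ω))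
    _ = K ^ 2 * Var[X; μ] := by
        rw [integral_const_mul, variance_eq_integral hX.1.aemeasurable]

end ProbabilityTheory

/-- For any real random variable `X` with finite second moment and any real `a`,
the variance of `min (X ·) a` is at most the variance of `X`. -/
theorem min_variance_le {Ω : Type*} [MeasurableSpace Ω]
    (μ : MeasureTheory.Measure Ω) [MeasureTheory.IsProbabilityMeasure μ]
    (X : Ω → ℝ) (hX : MeasureTheory.MemLp X 2 μ) (a : ℝ) :
    ProbabilityTheory.variance (fun ω => min (X ω) a) μ ≤ ProbabilityTheory.variance X μ := by
  simpa using (LipschitzWith.id.min_const a).variance_comp_le hX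
end

section
/- Let μ be a probability distribution on a finite set S and β ∈ [0,1]. Define the clipped expectation identity: for any V : S → ℝ, the expectation of the quantile-clipped vector satisfies μ · T_β(μ, V) ≤ μ · V ≤ μ · T_β(μ, V) + β · span(V), where span(V) = max V - min V. -/
/-- The largest `(1-β)`-quantile of `V` with respect to `μ`. -/
noncomputable def Qquant {S : Type*} [Fintype S] (μ : S → ℝ) (β : ℝ) (V : S → ℝ) : ℝ :=
  sSup {y : ℝ | ∃ x : S, V x = y ∧ β ≤ ∑ x' : S, if V x ≤ V x' then μ x' else 0}

/-- The quantile clipping operator: entries of `V` above the quantile are clipped down. -/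
noncomputable def Tclip {S : Type*} [Fintype S] (μ : S → ℝ) (β : ℝ) (V : S → ℝ) (s : S) : ℝ :=
  min (V s) (Qquant μ β V)

/-- `μ · T_β(μ,V) ≤ μ · V ≤ μ · T_β(μ,V) + β · span(V)`. -/
theorem clipped_expectation_bounds {S : Type*} [Fintype S] [Nonempty S]
    (μ : S → ℝ) (hμ0 : ∀ s, 0 ≤ μ s) (hμ1 : ∑ s, μ s = 1)
    (β : ℝ) (hβ : β ∈ Set.Icc (0 : ℝ) 1) (V : S → ℝ) :
    (∑ s, μ s * Tclip μ β V s ≤ ∑ s, μ s * V s) ∧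
    (∑ s, μ s * V s ≤ ∑ s, μ s * Tclip μ β V s
      + β * (Finset.univ.sup' Finset.univ_nonempty V
              - Finset.univ.inf' Finset.univ_nonempty V)) := by
  obtain ⟨hβ0, hβ1⟩ := hβ
  set M := Finset.univ.sup' Finset.univ_nonempty V with hMdef
  set m := Finset.univ.inf' Finset.univ_nonempty V with hmdef
  have hmle : ∀ x : S, m ≤ V x := fun x => Finset.inf'_le V (Finset.mem_univ x)
  have hleM : ∀ x : S, V x ≤ M := fun x => Finset.le_sup' V (Finset.mem_univ x)
  set Q := Qquant μ β V with hQdef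
  set A : Set ℝ :=
    {y : ℝ | ∃ x : S, V x = y ∧ β ≤ ∑ x' : S, if V x ≤ V x' then μ x' else 0} with hAdef
  have hAfin : A.Finite := by
    apply (Set.finite_range V).subset
    rintro y ⟨x, rfl, -⟩; exact ⟨x, rfl⟩
  obtain ⟨xmin, -, hxmin⟩ := Finset.exists_mem_eq_inf' (Finset.univ_nonempty (α := S)) V
  have hVxminA : V xmin ∈ A := by
    refine ⟨xmin, rfl, ?_⟩
    have heq : (∑ x' : S, if V xmin ≤ V x' then μ x' else 0) = ∑ x' : S, μ x' := by
      refine Finset.sum_congr rfl fun x' _ => ?_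
      rw [if_pos]
      rw [← hxmin]; exact hmle x'
    rw [heq, hμ1]; exact hβ1
  have hAne : A.Nonempty := ⟨_, hVxminA⟩
  have hQmem : Q ∈ A := hAne.csSup_mem hAfin
  have hmQ : m ≤ Q := by
    have := le_csSup hAfin.bddAbove hVxminA
    rw [hmdef, hxmin]; exact this
  have hlt : ∀ x : S, Q < V x → (∑ x' : S, if V x ≤ V x' then μ x' else 0) < β := by
    intro x hx
    by_contra h
    push_neg at h
    have : V x ≤ Q := le_csSup hAfin.bddAbove ⟨x, rfl, h⟩
    exact absurd hx (not_lt.mpr this)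
  constructor
  · refine Finset.sum_le_sum fun s _ => ?_
    exact mul_le_mul_of_nonneg_left (min_le_left _ _) (hμ0 s)
  · set B := Finset.univ.filter (fun s : S => Q < V s) with hBdef
    have hdiff : ∑ s, μ s * V s - ∑ s, μ s * Tclip μ β V s
        = ∑ s ∈ B, μ s * (V s - Q) := by
      rw [← Finset.sum_sub_distrib]
      rw [hBdef, Finset.sum_filter]
      refine Finset.sum_congr rfl fun s _ => ?_
      by_cases h : Q < V s
      · rw [if_pos h]
        have : Tclip μ β V s = Q := by
          simp [Tclip, ← hQdef, min_eq_right (le_of_lt h)]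
        rw [this]; ring
      · rw [if_neg h]
        have : Tclip μ β V s = V s := by
          simp [Tclip, ← hQdef, min_eq_left (not_lt.mp h)]
        rw [this]; ring
    have hBsum : ∑ s ∈ B, μ s ≤ β := by
      rcases B.eq_empty_or_nonempty with hB | hB
      · rw [hB]; simpa using hβ0
      · obtain ⟨s₀, hs₀, hs₀min⟩ := B.exists_min_image V hB
        have hs₀Q : Q < V s₀ := (Finset.mem_filter.mp hs₀).2
        have h1 : ∑ s ∈ B, μ s ≤ ∑ x' : S, if V s₀ ≤ V x' then μ x' else 0 := by
          rw [← Finset.sum_filter]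
          refine Finset.sum_le_sum_of_subset_of_nonneg ?_ (fun i _ _ => hμ0 i)
          intro s hs
          exact Finset.mem_filter.mpr ⟨Finset.mem_univ s, hs₀min s hs⟩
        exact h1.trans (le_of_lt (hlt s₀ hs₀Q))
    have hspan : (0:ℝ) ≤ M - m := sub_nonneg.mpr ((hmle (Classical.arbitrary S)).trans
      (hleM (Classical.arbitrary S)))
    have hbound : ∑ s ∈ B, μ s * (V s - Q) ≤ β * (M - m) := by
      calc ∑ s ∈ B, μ s * (V s - Q) ≤ ∑ s ∈ B, μ s * (M - m) := by
            refine Finset.sum_le_sum fun s _ => ?_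
            exact mul_le_mul_of_nonneg_left (sub_le_sub (hleM s) hmQ) (hμ0 s)
        _ = (∑ s ∈ B, μ s) * (M - m) := by rw [Finset.sum_mul]
        _ ≤ β * (M - m) := mul_le_mul_of_nonneg_right hBsum hspan
    linarith [hdiff, hbound]
end

section
/- For any probability distribution μ on a finite set S, any β ∈ [0,1], and any V : S → ℝ, the variance with respect to μ of the quantile-clipped vector T_β(μ, V) is at most the variance with respect to μ of V. -/
lemma var_pair {S : Type*} [Fintype S] (μ : S → ℝ) (hμ1 : ∑ s, μ s = 1) (W : S → ℝ) :
    (∑ s, μ s * (W s) ^ 2) - (∑ s, μ s * W s) ^ 2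
      = (1/2) * ∑ s, ∑ t, μ s * μ t * (W s - W t) ^ 2 := by
  have h : ∑ s, ∑ t, μ s * μ t * (W s - W t) ^ 2
      = (∑ s, μ s * (W s) ^ 2) * (∑ t, μ t) + (∑ s, μ s) * (∑ t, μ t * (W t) ^ 2)
        - 2 * ((∑ s, μ s * W s) * (∑ t, μ t * W t)) := by
    simp only [Finset.sum_mul_sum, Finset.mul_sum, Finset.sum_mul, ← Finset.sum_sub_distrib,
      ← Finset.sum_add_distrib]
    refine Finset.sum_congr rfl fun s _ => Finset.sum_congr rfl fun t _ => ?_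
    ring
  rw [h, hμ1]; ring

/-- The variance of the quantile-clipped vector is at most the variance of `V`. -/
theorem clipped_variance_le {S : Type*} [Fintype S] [Nonempty S]
    (μ : S → ℝ) (hμ0 : ∀ s, 0 ≤ μ s) (hμ1 : ∑ s, μ s = 1)
    (β : ℝ) (hβ : β ∈ Set.Icc (0 : ℝ) 1) (V : S → ℝ) :
    (∑ s, μ s * (Tclip μ β V s) ^ 2) - (∑ s, μ s * Tclip μ β V s) ^ 2
      ≤ (∑ s, μ s * (V s) ^ 2) - (∑ s, μ s * V s) ^ 2 := by
  rw [var_pair μ hμ1, var_pair μ hμ1]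
  have h2 : (0:ℝ) ≤ 1/2 := by norm_num
  refine mul_le_mul_of_nonneg_left ?_ h2
  refine Finset.sum_le_sum fun s _ => Finset.sum_le_sum fun t _ => ?_
  refine mul_le_mul_of_nonneg_left ?_ (mul_nonneg (hμ0 s) (hμ0 t))
  have key : |Tclip μ β V s - Tclip μ β V t| ≤ |V s - V t| := by
    unfold Tclip
    calc |min (V s) (Qquant μ β V) - min (V t) (Qquant μ β V)|
        ≤ max |V s - V t| |Qquant μ β V - Qquant μ β V| := abs_min_sub_min_le_max _ _ _ _
      _ = |V s - V t| := by simp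
  calc (Tclip μ β V s - Tclip μ β V t) ^ 2 = |Tclip μ β V s - Tclip μ β V t| ^ 2 := (sq_abs _).symm
    _ ≤ |V s - V t| ^ 2 := by
        exact pow_le_pow_left₀ (abs_nonneg _) key 2
    _ = (V s - V t) ^ 2 := sq_abs _
end

section
/- For any probability distribution μ on a finite set S and any β ∈ [0,1], the largest-(1-β)-quantile function V ↦ Q_β(μ, V) is 1-Lipschitz with respect to the sup norm: |Q_β(μ, V) - Q_β(μ, V')| ≤ ‖V - V'‖_∞ for all V, V' : S → ℝ. -/
lemma Qset_nonempty {S : Type*} [Fintype S] [Nonempty S] (μ : S → ℝ) (hμ1 : ∑ s, μ s = 1)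
    {β : ℝ} (hβ : β ≤ 1) (V : S → ℝ) :
    {y : ℝ | ∃ x : S, V x = y ∧ β ≤ ∑ x' : S, if V x ≤ V x' then μ x' else 0}.Nonempty := by
  obtain ⟨x₀, -, hx₀⟩ := Finset.exists_min_image Finset.univ V
    ⟨Classical.arbitrary S, Finset.mem_univ _⟩
  refine ⟨V x₀, x₀, rfl, ?_⟩
  have h : ∑ x' : S, (if V x₀ ≤ V x' then μ x' else 0) = ∑ x' : S, μ x' :=
    Finset.sum_congr rfl fun x' _ => by simp [hx₀ x' (Finset.mem_univ x')]
  rw [h, hμ1]; exact hβ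

lemma Qset_bddAbove {S : Type*} [Fintype S] (μ : S → ℝ) (β : ℝ) (V : S → ℝ) :
    BddAbove {y : ℝ | ∃ x : S, V x = y ∧ β ≤ ∑ x' : S, if V x ≤ V x' then μ x' else 0} := by
  apply Set.Finite.bddAbove
  apply (Set.finite_range V).subset
  rintro y ⟨x, rfl, -⟩
  exact ⟨x, rfl⟩

lemma Qquant_le {S : Type*} [Fintype S] [Nonempty S]
    (μ : S → ℝ) (hμ0 : ∀ s, 0 ≤ μ s) (hμ1 : ∑ s, μ s = 1)
    {β : ℝ} (hβ : β ≤ 1) (V V' : S → ℝ) {ε : ℝ} (hε : ∀ s, |V s - V' s| ≤ ε) :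
    Qquant μ β V ≤ Qquant μ β V' + ε := by
  apply csSup_le (Qset_nonempty μ hμ1 hβ V)
  rintro y ⟨x, rfl, hx⟩
  set T : Finset S := Finset.univ.filter (fun x' => V x ≤ V x') with hT
  obtain ⟨z, hzT, hz⟩ := Finset.exists_min_image T V'
    ⟨x, by simp [hT]⟩
  have hzx : V x ≤ V z := by
    have := hzT; rw [hT, Finset.mem_filter] at this; exact this.2
  -- V' z belongs to the set for V'
  have hmem : V' z ∈ {y : ℝ | ∃ x : S, V' x = y ∧
      β ≤ ∑ x' : S, if V' x ≤ V' x' then μ x' else 0} := by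
    refine ⟨z, rfl, ?_⟩
    calc β ≤ ∑ x' : S, (if V x ≤ V x' then μ x' else 0) := hx
      _ ≤ ∑ x' : S, (if V' z ≤ V' x' then μ x' else 0) := by
          apply Finset.sum_le_sum
          intro i _
          by_cases h1 : V x ≤ V i
          · have h2 : V' z ≤ V' i := hz i (by simp [hT, h1])
            simp [h1, h2]
          · simp only [h1, if_false]
            split <;> [exact hμ0 i; exact le_refl 0]
  have h1 : V' z ≤ Qquant μ β V' := le_csSup (Qset_bddAbove μ β V') hmem
  have h2 : V z - V' z ≤ ε := (abs_le.mp (hε z)).2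
  linarith
  
/-- The quantile function `V ↦ Q_β(μ,V)` is 1-Lipschitz in the sup norm. -/
theorem quantile_lipschitz {S : Type*} [Fintype S] [Nonempty S]
    (μ : S → ℝ) (hμ0 : ∀ s, 0 ≤ μ s) (hμ1 : ∑ s, μ s = 1)
    (β : ℝ) (hβ : β ∈ Set.Icc (0 : ℝ) 1) (V V' : S → ℝ) :
    |Qquant μ β V - Qquant μ β V'|
      ≤ Finset.univ.sup' Finset.univ_nonempty (fun s => |V s - V' s|) := by
  set ε := Finset.univ.sup' Finset.univ_nonempty (fun s => |V s - V' s|) with hε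
  have hε1 : ∀ s, |V s - V' s| ≤ ε := fun s => Finset.le_sup' (fun s => |V s - V' s|) (Finset.mem_univ s)
  have hε2 : ∀ s, |V' s - V s| ≤ ε := fun s => abs_sub_comm (V s) (V' s) ▸ hε1 s
  have h1 := Qquant_le μ hμ0 hμ1 hβ.2 V V' hε1
  have h2 := Qquant_le μ hμ0 hμ1 hβ.2 V' V hε2
  rw [abs_sub_le_iff]
  constructor <;> linarith
end

section
/- For any real x ≥ 4 and any δ ∈ (0, 1/e], we have (1 - 1/x)^{⌈(x/2)·log(1/δ)⌉} ≥ δ. -/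
/-- For any real `x ≥ 4` and `δ ∈ (0, 1/e]`, `(1 - 1/x)^⌈(x/2)·log(1/δ)⌉ ≥ δ`. -/
theorem geom_bound_delta (x δ : ℝ) (hx : 4 ≤ x) (hδ : δ ∈ Set.Ioc 0 (1 / Real.exp 1)) :
    δ ≤ (1 - 1 / x) ^ ⌈x / 2 * Real.log (1 / δ)⌉₊ := by
  obtain ⟨hδ0, hδe⟩ := hδ
  have hxpos : (0:ℝ) < x := by linarith
  have hb : (0:ℝ) < 1 - 1/x := by
    have : 1/x ≤ 1/4 := by
      apply one_div_le_one_div_of_le <;> linarith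
    linarith
  set L := Real.log (1/δ) with hLdef
  have hL : 1 ≤ L := by
    have h1 : Real.exp 1 ≤ 1/δ := by
      rw [le_div_iff₀ hδ0]
      calc Real.exp 1 * δ ≤ Real.exp 1 * (1 / Real.exp 1) := by
            exact mul_le_mul_of_nonneg_left hδe (Real.exp_pos 1).le
        _ = 1 := by field_simp
    calc (1:ℝ) = Real.log (Real.exp 1) := (Real.log_exp 1).symm
      _ ≤ L := Real.log_le_log (Real.exp_pos 1) h1
  set n := ⌈x / 2 * L⌉₊ with hndef
  have hn : (n:ℝ) < x/2 * L + 1 := by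
    apply Nat.ceil_lt_add_one
    positivity
  -- bound on -log(1 - 1/x)
  have hlog : -Real.log (1 - 1/x) ≤ 1/(x-1) := by
    have h1 : Real.log (1/(1 - 1/x)) ≤ 1/(1 - 1/x) - 1 :=
      Real.log_le_sub_one_of_pos (by positivity)
    rw [Real.log_div one_ne_zero (ne_of_gt hb), Real.log_one] at h1
    have hx1 : 1 - 1/x = (x-1)/x := by field_simp
    have h2 : 1/(1 - 1/x) - 1 = 1/(x-1) := by
      rw [hx1, one_div_div, div_sub_one (by linarith : x - (1:ℝ) ≠ 0)]
      ring_nf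
    linarith [h1, h2 ▸ h1]
  have hxm1 : (0:ℝ) < x - 1 := by linarith
  have key : (n:ℝ) * (1/(x-1)) ≤ L := by
    rw [mul_one_div, div_le_iff₀ hxm1]
    nlinarith [hn, hL, hx]
  have hlogδ : Real.log δ = -L := by
    rw [hLdef, Real.log_div one_ne_zero (ne_of_gt hδ0), Real.log_one]; ring
  have hmain : Real.log δ ≤ (n:ℝ) * Real.log (1 - 1/x) := by
    rw [hlogδ]
    have h3 : (n:ℝ) * (-Real.log (1 - 1/x)) ≤ (n:ℝ) * (1/(x-1)) :=
      mul_le_mul_of_nonneg_left hlog (Nat.cast_nonneg n)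
    nlinarith [key]
  have := Real.exp_le_exp.mpr hmain
  rwa [Real.exp_log hδ0, mul_comm, Real.exp_mul, Real.exp_log hb,
    Real.rpow_natCast] at this
end

section
/- For any real x ≥ 4 and any δ ∈ (0, 1/e^9], we have (1 - 1/(3x))^{⌈(x/6)·log(1/δ)⌉} ≥ 4·δ^{1/3}. -/
/-!
With `ℓ = log δ ≤ -9` the left side is `4 e^{ℓ/3}`. For `x ≥ 4` the base satisfies
`1 - 1/(3x) ≥ e^{-1/(3x-1)} ≥ e^{-4/(11x)}`, and the exponent is `n ≤ -xℓ/6 + 1`, so the power is at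
least `e^{2ℓ/33 - 1/11}`. Since `ℓ ≤ -9` this is at least `e^{2 + ℓ/3} ≥ 4 e^{ℓ/3}`.
-/

open Real

namespace Real

lemma exp_neg_div_one_sub_le_one_sub {t : ℝ} (ht : t < 1) : exp (-(t / (1 - t))) ≤ 1 - t := by
  have hpos : 0 < 1 - t := sub_pos.2 ht
  rw [← le_log_iff_exp_le hpos]
  convert one_sub_inv_le_log_of_pos hpos using 1
  field_simp
  ring

lemma exp_neg_four_div_le_one_sub_one_div_three_mul {x : ℝ} (hx : 4 ≤ x) :
    exp (-(4 / (11 * x))) ≤ 1 - 1 / (3 * x) := by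
  have ht : 1 / (3 * x) < 1 := by rw [div_lt_one (by positivity)]; linarith
  refine (exp_le_exp.2 ?_).trans (exp_neg_div_one_sub_le_one_sub ht)
  have hsimp : 1 / (3 * x) / (1 - 1 / (3 * x)) = 1 / (3 * x - 1) := by
    field_simp
  rw [neg_le_neg_iff, hsimp, div_le_div_iff₀ (by linarith) (by positivity)]
  linarith

lemma four_le_exp_two : (4 : ℝ) ≤ exp 2 := by
  have h := add_one_le_exp 1
  calc (4 : ℝ) = 2 ^ 2 := by norm_num
    _ ≤ exp 1 ^ 2 := by gcongr; linarith
    _ = exp 2 := by rw [← exp_nat_mul]; norm_num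

end Real

/-- For any real `x ≥ 4` and `δ ∈ (0, 1/e⁹]`,
`(1 - 1/(3x))^⌈(x/6)·log(1/δ)⌉ ≥ 4·δ^(1/3)`. -/
theorem geom_bound_delta_third (x δ : ℝ) (hx : 4 ≤ x)
    (hδ : δ ∈ Set.Ioc 0 (1 / Real.exp 9)) :
    4 * δ ^ ((1 : ℝ) / 3) ≤ (1 - 1 / (3 * x)) ^ ⌈x / 6 * Real.log (1 / δ)⌉₊ := by
  obtain ⟨hδ0, hδ9⟩ := hδ
  have hlog : log δ ≤ -9 := (log_le_iff_le_exp hδ0).2 (by rwa [exp_neg, ← one_div])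
  rw [one_div δ, log_inv]
  set n := ⌈x / 6 * -log δ⌉₊
  have hn : (n : ℝ) ≤ x / 6 * -log δ + 1 := (Nat.ceil_lt_add_one (by nlinarith)).le
  have hexponent : 2 + log δ / 3 ≤ n * -(4 / (11 * x)) := by
    have hmul := mul_le_mul_of_nonneg_right hn (by positivity : (0 : ℝ) ≤ 4 / (11 * x))
    have hexpand : (x / 6 * -log δ + 1) * (4 / (11 * x)) = -(2 * log δ / 33) + 4 / (11 * x) := by
      field_simp
      ring
    have hsmall : 4 / (11 * x) ≤ 1 / 11 := by
      rw [div_le_div_iff₀ (by positivity) (by norm_num)]; linarith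
    linarith
  calc 4 * δ ^ ((1 : ℝ) / 3) = 4 * exp (log δ / 3) := by rw [rpow_def_of_pos hδ0]; ring_nf
    _ ≤ exp 2 * exp (log δ / 3) := by gcongr; exact four_le_exp_two
    _ = exp (2 + log δ / 3) := (exp_add _ _).symm
    _ ≤ exp (n * -(4 / (11 * x))) := exp_le_exp.2 hexponent
    _ = exp (-(4 / (11 * x))) ^ n := exp_nat_mul _ _
    _ ≤ (1 - 1 / (3 * x)) ^ n :=
      pow_le_pow_left₀ (exp_pos _).le (exp_neg_four_div_le_one_sub_one_div_three_mul hx) n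
end

section
/- For any p, q ∈ (0, 1/2] with p < q, the Kullback–Leibler divergences between Bernoulli distributions satisfy KL(Ber(p) ‖ Ber(q)) ≤ KL(Ber(q) ‖ Ber(p)) ≤ (p - q)^2 / (p(1 - p)), and consequently their sum is at most 2(p - q)^2 / (p(1 - p)). -/
/-!
Writing `p = m - d`, `q = m + d`, the difference `KL(q ‖ p) - KL(p ‖ q)` equals
`2 (φ m - φ (1 - m))` with `φ c = c log ((c + d) / (c - d)) = ∑ₖ 2 d (d / c)^(2k) / (2k + 1)`.
Every term of this series decreases in `c`, so the difference is nonnegative as soon as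
`m ≤ 1 - m`. The upper bound is `log t ≤ t - 1` applied to both likelihood ratios, which
bounds `KL(q ‖ p)` by the χ²-divergence `(p - q)² / (p (1 - p))`.
-/

/-- KL divergence between Bernoulli distributions with parameters `a, b ∈ (0,1)`. -/
noncomputable def klBer (a b : ℝ) : ℝ :=
  a * Real.log (a / b) + (1 - a) * Real.log ((1 - a) / (1 - b))

open Real

lemma hasSum_mul_log_add_sub_log_sub {c d : ℝ} (hd : 0 ≤ d) (hdc : d < c) :
    HasSum (fun k : ℕ => 2 * (1 / (2 * k + 1)) * d * (d / c) ^ (2 * k))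
      (c * (log (c + d) - log (c - d))) := by
  have hc : 0 < c := hd.trans_lt hdc
  have hx : |d / c| < 1 := by
    rw [abs_of_nonneg (by positivity), div_lt_one hc]
    exact hdc
  have hlog : log (1 + d / c) - log (1 - d / c) = log (c + d) - log (c - d) := by
    rw [one_add_div hc.ne', one_sub_div hc.ne', log_div (by linarith) hc.ne',
      log_div (by linarith) hc.ne']
    ring
  rw [← hlog]
  refine ((hasSum_log_sub_log_of_abs_lt_one hx).mul_left c).congr_fun fun k => ?_
  rw [pow_succ]
  field_simp

lemma antitoneOn_mul_log_add_sub_log_sub {d : ℝ} (hd : 0 ≤ d) :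
    AntitoneOn (fun c => c * (log (c + d) - log (c - d))) (Set.Ioi d) := by
  intro c hc c' hc' hcc'
  refine hasSum_le (fun k => ?_) (hasSum_mul_log_add_sub_log_sub hd hc')
    (hasSum_mul_log_add_sub_log_sub hd hc)
  have hc0 : 0 < c := hd.trans_lt hc
  have hc'0 : 0 < c' := hd.trans_lt hc'
  gcongr

theorem klBer_eq_sub_log {a b : ℝ} (ha0 : 0 < a) (ha1 : a < 1) (hb0 : 0 < b) (hb1 : b < 1) :
    klBer a b = a * (log a - log b) + (1 - a) * (log (1 - a) - log (1 - b)) := by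
  rw [klBer, log_div ha0.ne' hb0.ne', log_div (by linarith) (by linarith)]

theorem klBer_le_klBer_swap {p q : ℝ} (hp : 0 < p) (hpq : p ≤ q) (hpq1 : p + q ≤ 1) :
    klBer p q ≤ klBer q p := by
  have hd : 0 ≤ (q - p) / 2 := by linarith
  have key := antitoneOn_mul_log_add_sub_log_sub hd
    (show (q - p) / 2 < (p + q) / 2 by linarith) (show (q - p) / 2 < 1 - (p + q) / 2 by linarith)
    (show (p + q) / 2 ≤ 1 - (p + q) / 2 by linarith)
  simp only at key
  rw [show (p + q) / 2 + (q - p) / 2 = q by ring, show (p + q) / 2 - (q - p) / 2 = p by ring,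
    show 1 - (p + q) / 2 + (q - p) / 2 = 1 - p by ring,
    show 1 - (p + q) / 2 - (q - p) / 2 = 1 - q by ring] at key
  rw [klBer_eq_sub_log hp (by linarith) (by linarith) (by linarith),
    klBer_eq_sub_log (by linarith) (by linarith) hp (by linarith)]
  linear_combination 2 * key

theorem klBer_le_sq_sub_div {a b : ℝ} (ha0 : 0 < a) (ha1 : a < 1) (hb0 : 0 < b) (hb1 : b < 1) :
    klBer a b ≤ (a - b) ^ 2 / (b * (1 - b)) := by
  have hb1' : 0 < 1 - b := by linarith
  calc klBer a b ≤ a * (a / b - 1) + (1 - a) * ((1 - a) / (1 - b) - 1) := by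
        unfold klBer
        gcongr
        · exact log_le_sub_one_of_pos (by positivity)
        · exact log_le_sub_one_of_pos (div_pos (by linarith) hb1')
    _ = (a - b) ^ 2 / (b * (1 - b)) := by
        field_simp
        ring

/-- For `p, q ∈ (0, 1/2]` with `p < q`:
`KL(Ber p ‖ Ber q) ≤ KL(Ber q ‖ Ber p) ≤ (p-q)²/(p(1-p))`, and hence the sum of the
two divergences is at most `2(p-q)²/(p(1-p))`. -/
theorem bernoulli_kl_bounds (p q : ℝ) (hp : p ∈ Set.Ioc 0 (1/2 : ℝ))
    (hq : q ∈ Set.Ioc 0 (1/2 : ℝ)) (hpq : p < q) :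
    klBer p q ≤ klBer q p ∧ klBer q p ≤ (p - q) ^ 2 / (p * (1 - p)) ∧
    klBer p q + klBer q p ≤ 2 * (p - q) ^ 2 / (p * (1 - p)) := by
  obtain ⟨hp0, hp2⟩ := hp
  obtain ⟨hq0, hq2⟩ := hq
  have hswap : klBer p q ≤ klBer q p := klBer_le_klBer_swap hp0 hpq.le (by linarith)
  have hchi : klBer q p ≤ (p - q) ^ 2 / (p * (1 - p)) := by
    rw [sub_sq_comm]
    exact klBer_le_sq_sub_div hq0 (by linarith) hp0 (by linarith)
  refine ⟨hswap, hchi, ?_⟩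
  rw [mul_div_assoc, two_mul]
  linarith
end

section
/- Let I = [a, b] be a closed interval with a < b, let x_1, …, x_n ∈ I, and let p_1, …, p_n > 0 with Σ p_i = 1. If f : [a, b] → ℝ is convex, then Σ_i p_i f(x_i) ≤ f(Σ_i p_i x_i) + f(a) + f(b) - 2 f((a+b)/2). -/
/-!
The secant line `L` of `f` through `(a, f a)` and `(b, f b)` dominates `f` on `[a, b]` and is
affine, so `∑ pᵢ f(xᵢ) ≤ ∑ pᵢ L(xᵢ) = L(X)` for `X = ∑ pᵢ xᵢ`. The gap `g = L - f` is concave and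
nonnegative on `[a, b]`, which forces `g X ≤ 2 g((a + b)/2)`; and `g((a + b)/2)` is
`(f a + f b)/2 - f((a + b)/2)`.
-/

open Finset Set

noncomputable def secantLine (f : ℝ → ℝ) (a b y : ℝ) : ℝ := f a + slope f a b * (y - a)

lemma secantLine_midpoint (f : ℝ → ℝ) {a b : ℝ} (hab : a ≠ b) :
    secantLine f a b ((a + b) / 2) = (f a + f b) / 2 := by
  rw [secantLine, slope_def_field]
  field_simp [sub_ne_zero.2 hab.symm]
  ring

lemma sum_mul_secantLine {ι : Type*} (t : Finset ι) (w x : ι → ℝ) (hw : ∑ i ∈ t, w i = 1)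
    (f : ℝ → ℝ) (a b : ℝ) :
    ∑ i ∈ t, w i * secantLine f a b (x i) = secantLine f a b (∑ i ∈ t, w i * x i) := by
  simp only [secantLine, mul_add, mul_sub, sum_add_distrib, sum_sub_distrib, ← sum_mul, hw,
    mul_left_comm _ (slope f a b), ← mul_sum]
  ring

lemma concaveOn_secantLine_sub {s : Set ℝ} {f : ℝ → ℝ} (hf : ConvexOn ℝ s f) (a b : ℝ) :
    ConcaveOn ℝ s (fun y => secantLine f a b y - f y) := by
  refine ConcaveOn.sub ⟨hf.1, fun x _ y _ μ ν _ _ hμν => le_of_eq ?_⟩ hf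
  simp only [secantLine, smul_eq_mul]
  linear_combination (f a - slope f a b * a) * hμν

lemma ConvexOn.le_secantLine {f : ℝ → ℝ} {a b y : ℝ} (hf : ConvexOn ℝ (Icc a b) f)
    (hy : y ∈ Icc a b) : f y ≤ secantLine f a b y := by
  rcases eq_or_lt_of_le hy.1 with rfl | hay
  · simp [secantLine]
  have hslope : (f y - f a) / (y - a) ≤ slope f a b := by
    rw [slope_def_field]
    exact hf.secant_mono (left_mem_Icc.2 (hay.le.trans hy.2)) hy
      (right_mem_Icc.2 (hay.le.trans hy.2)) hay.ne' (hay.trans_le hy.2).ne' hy.2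
  rw [div_le_iff₀ (sub_pos.2 hay)] at hslope
  rw [secantLine]
  linarith

lemma ConvexOn.sum_mul_le_secantLine {ι : Type*} {t : Finset ι} {w x : ι → ℝ} {f : ℝ → ℝ}
    {a b : ℝ} (hf : ConvexOn ℝ (Icc a b) f) (hw₀ : ∀ i ∈ t, 0 ≤ w i) (hw₁ : ∑ i ∈ t, w i = 1)
    (hx : ∀ i ∈ t, x i ∈ Icc a b) :
    ∑ i ∈ t, w i * f (x i) ≤ secantLine f a b (∑ i ∈ t, w i * x i) := by
  rw [← sum_mul_secantLine t w x hw₁]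
  exact sum_le_sum fun i hi => mul_le_mul_of_nonneg_left (hf.le_secantLine (hx i hi)) (hw₀ i hi)

/- `z` and its reflection `a + b - z` average to the midpoint, and `g ≥ 0` on `[a, b]` by the
minimum principle. -/
lemma ConcaveOn.le_two_mul_midpoint {g : ℝ → ℝ} {a b z : ℝ} (hg : ConcaveOn ℝ (Icc a b) g)
    (ha : 0 ≤ g a) (hb : 0 ≤ g b) (hz : z ∈ Icc a b) : g z ≤ 2 * g ((a + b) / 2) := by
  have hab : a ≤ b := hz.1.trans hz.2
  have haI : a ∈ Icc a b := left_mem_Icc.2 hab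
  have hbI : b ∈ Icc a b := right_mem_Icc.2 hab
  have hz' : a + b - z ∈ Icc a b := ⟨by linarith [hz.2], by linarith [hz.1]⟩
  have hnonneg : 0 ≤ g (a + b - z) :=
    (le_min ha hb).trans (hg.min_le_of_mem_Icc haI hbI hz')
  have hmid := hg.2 hz hz' (by norm_num : (0 : ℝ) ≤ 1 / 2) (by norm_num : (0 : ℝ) ≤ 1 / 2)
    (by norm_num)
  simp only [smul_eq_mul] at hmid
  rw [show 1 / 2 * z + 1 / 2 * (a + b - z) = (a + b) / 2 by ring] at hmid
  linarith

/-- Reverse Jensen-type inequality: for a convex `f` on `[a,b]`, weights `p` summing to 1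
and points `x i ∈ [a,b]`,
`Σ p i · f (x i) ≤ f (Σ p i · x i) + f a + f b - 2 f((a+b)/2)`. -/
theorem reverse_jensen (a b : ℝ) (hab : a < b) (n : ℕ) (x : Fin n → ℝ) (p : Fin n → ℝ)
    (hx : ∀ i, x i ∈ Set.Icc a b) (hp : ∀ i, 0 < p i) (hp1 : ∑ i, p i = 1)
    (f : ℝ → ℝ) (hf : ConvexOn ℝ (Set.Icc a b) f) :
    ∑ i, p i * f (x i) ≤ f (∑ i, p i * x i) + f a + f b - 2 * f ((a + b) / 2) := by
  set X := ∑ i, p i * x i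
  have hX : X ∈ Icc a b := by
    simpa only [smul_eq_mul] using
      (convex_Icc a b).sum_mem (fun i _ => (hp i).le) hp1 fun i _ => hx i
  have hsecant : ∑ i, p i * f (x i) ≤ secantLine f a b X :=
    hf.sum_mul_le_secantLine (fun i _ => (hp i).le) hp1 fun i _ => hx i
  have hgap : secantLine f a b X - f X ≤ 2 * (secantLine f a b ((a + b) / 2) - f ((a + b) / 2)) :=
    (concaveOn_secantLine_sub hf a b).le_two_mul_midpoint
      (sub_nonneg.2 (hf.le_secantLine (left_mem_Icc.2 hab.le)))
      (sub_nonneg.2 (hf.le_secantLine (right_mem_Icc.2 hab.le))) hX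
  rw [secantLine_midpoint f hab.ne] at hgap
  linarith
end
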